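/- Let G be a subgroup of (ℂ,+). (i) Every λ-quiddity over G of size at least 5 that has some component equal to 0 is reducible. (ii) If 1 ∉ G, then every λ-quiddity over G of size 4 is irreducible. -/

import Mathlib

open Matrix Polynomial

noncomputable section

/-- The elementary matrix [[a, -1], [1, 0]]. -/
def matE (a : ℂ) : Matrix (Fin 2) (Fin 2) ℂ := !![a, -1; 1, 0]

/-- M_n(a_1, …, a_n) = matE a_n * matE a_{n-1} * ⋯ * matE a_1, for the list [a_1, …, a_n]. -/
def Mlist (l : List ℂ) : Matrix (Fin 2) (Fin 2) ℂ := (l.reverse.map matE).prod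

/-- A λ-quiddity over R : a nonempty tuple of elements of R with M_n(a_1,…,a_n) = ±Id. -/
def IsQuiddity (R : Set ℂ) (l : List ℂ) : Prop :=
  l ≠ [] ∧ (∀ x ∈ l, x ∈ R) ∧ (Mlist l = 1 ∨ Mlist l = -1)

/-- (a_1,…,a_n) ⊕ (b_1,…,b_m) := (a_1+b_m, a_2,…,a_{n-1}, a_n+b_1, b_2,…,b_{m-1}). -/
def oplus (a b : List ℂ) : List ℂ :=
  (a.headI + b.getLastD 0) ::
    (a.tail.dropLast ++ (a.getLastD 0 + b.headI) :: b.tail.dropLast)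

/-- b is obtained from a by a cyclic permutation of a or of the reversal of a. -/
def CyclicEquiv (a b : List ℂ) : Prop :=
  (∃ k, b = a.rotate k) ∨ (∃ k, b = a.reverse.rotate k)

/-- A λ-quiddity c over R is reducible if c ∼ (a_1,…,a_m) ⊕ (b_1,…,b_l) with
(a_1,…,a_m) a tuple of elements of R, (b_1,…,b_l) a λ-quiddity over R, m ≥ 3 and l ≥ 3. -/
def ReducibleQuiddity (R : Set ℂ) (c : List ℂ) : Prop :=
  ∃ a b : List ℂ, (∀ x ∈ a, x ∈ R) ∧ IsQuiddity R b ∧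
    3 ≤ a.length ∧ 3 ≤ b.length ∧ CyclicEquiv c (oplus a b)

/-- The irreducible λ-quiddities over R : the λ-quiddities of size ≥ 3 which are not
reducible (those of size < 3, i.e. (0,0), are by convention not irreducible). -/
def IrreducibleQuiddity (R : Set ℂ) (c : List ℂ) : Prop :=
  IsQuiddity R c ∧ 3 ≤ c.length ∧ ¬ ReducibleQuiddity R c

/-- The subgroup ⟨w⟩ = {kw : k ∈ ℤ} of (ℂ, +), as a set. -/
def subgroupGen (w : ℂ) : Set ℂ := {x | ∃ k : ℤ, x = (k : ℂ) * w}

end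

/-!
(i) Rotate a λ-quiddity containing a zero so that it reads `(p, m, q, t, 0)`; it is then
`(p + t, m, q) ⊕ (0, t, 0, -t)`, and `(0, t, 0, -t)` is a λ-quiddity over `G` since
`M_4(0, t, 0, -t) = Id`.
(ii) A decomposition of a 4-tuple as a sum needs two 3-tuples, and `M_3(x, y, z)` has
`(2, 2)`-entry `-y`, so a λ-quiddity `(x, y, z)` has `y = ±1`, forcing `1 ∈ G`.
-/

theorem List.exists_rotate_eq_append_singleton {α : Type*} {x : α} {l : List α} (h : x ∈ l) :
    ∃ k d, l.rotate k = d ++ [x] := by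
  obtain ⟨u, v, rfl⟩ := List.append_of_mem h
  exact ⟨(u ++ [x]).length, v ++ u, by simpa using List.rotate_append_length_eq (u ++ [x]) v⟩

theorem List.exists_eq_cons_append_pair {α : Type*} {d : List α} (h : 4 ≤ d.length) :
    ∃ p m q t, m ≠ [] ∧ d = p :: (m ++ [q, t]) := by
  obtain _ | ⟨p, d⟩ := d
  · simp at h
  obtain rfl | ⟨e, t, rfl⟩ := d.eq_nil_or_concat
  · simp at h
  obtain rfl | ⟨m, q, rfl⟩ := e.eq_nil_or_concat
  · simp at h
  refine ⟨p, m, q, t, ?_, by simp⟩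
  rintro rfl
  simp at h

section Quiddity

variable {R : Set ℂ} {a b c : List ℂ}

theorem Mlist_three (x y z : ℂ) :
    Mlist [x, y, z] = !![z * (x * y - 1) - x, 1 - z * y; x * y - 1, -y] := by
  ext i j
  fin_cases i <;> fin_cases j <;> simp [Mlist, matE, Matrix.mul_apply, Fin.sum_univ_succ] <;> ring

theorem Mlist_zero_self_zero_neg (t : ℂ) : Mlist [0, t, 0, -t] = 1 := by
  ext i j
  fin_cases i <;> fin_cases j <;> simp [Mlist, matE, Matrix.mul_apply, Fin.sum_univ_succ]

theorem IsQuiddity.mid_eq_one_or_neg_one {x y z : ℂ} (h : IsQuiddity R [x, y, z]) :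
    y = 1 ∨ y = -1 := by
  obtain ⟨-, -, hM⟩ := h
  rcases hM with hM | hM <;> have h11 := congr_fun (congr_fun hM 1) 1 <;>
    simp [Mlist_three] at h11
  · exact Or.inr (by linear_combination -h11)
  · exact Or.inl h11

theorem isQuiddity_zero_self_zero_neg {G : AddSubgroup ℂ} {t : ℂ} (ht : t ∈ G) :
    IsQuiddity G [0, t, 0, -t] := by
  refine ⟨by simp, ?_, Or.inl (Mlist_zero_self_zero_neg t)⟩
  simp only [List.mem_cons, List.not_mem_nil, or_false]
  rintro x (rfl | rfl | rfl | rfl)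
  all_goals first | exact G.zero_mem | exact ht | exact G.neg_mem ht

theorem oplus_zero_self_zero_neg (x q t : ℂ) (m : List ℂ) :
    oplus (x :: (m ++ [q])) [0, t, 0, -t] = (x - t) :: (m ++ [q, t, 0]) := by
  simp [oplus, sub_eq_add_neg, List.getLast?_cons]

theorem length_oplus (ha : 2 ≤ a.length) (hb : 2 ≤ b.length) :
    (oplus a b).length = a.length + b.length - 2 := by
  simp only [oplus, List.length_cons, List.length_append, List.length_dropLast,
    List.length_tail]
  omega

theorem CyclicEquiv.length_eq (h : CyclicEquiv a b) : b.length = a.length := by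
  rcases h with ⟨k, rfl⟩ | ⟨k, rfl⟩ <;> simp

theorem reducibleQuiddity_of_rotate_eq {G : AddSubgroup ℂ} {k : ℕ} {p q t : ℂ} {m : List ℂ}
    (hc : ∀ x ∈ c, x ∈ G) (hk : c.rotate k = p :: (m ++ [q, t, 0])) (hm : m ≠ []) :
    ReducibleQuiddity G c := by
  have hG : ∀ x ∈ p :: (m ++ [q, t, 0]), x ∈ G := fun x hx =>
    hc x (List.mem_rotate.mp (hk ▸ hx))
  have hlen : 1 ≤ m.length := List.length_pos_iff.mpr hm
  refine ⟨(p + t) :: (m ++ [q]), [0, t, 0, -t], ?_, isQuiddity_zero_self_zero_neg (hG t (by simp)),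
    by simp only [List.length_cons, List.length_append]; omega, by simp,
    Or.inl ⟨k, by rw [hk, oplus_zero_self_zero_neg, add_sub_cancel_right]⟩⟩
  simp only [List.mem_cons, List.mem_append, List.not_mem_nil, or_false]
  rintro x (rfl | hx | rfl)
  · exact G.add_mem (hG p (by simp)) (hG t (by simp))
  · exact hG x (by simp [hx])
  · exact hG x (by simp)

theorem IsQuiddity.reducibleQuiddity_of_zero_mem {G : AddSubgroup ℂ} (hc : IsQuiddity G c)
    (h5 : 5 ≤ c.length) (h0 : (0 : ℂ) ∈ c) : ReducibleQuiddity G c := by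
  obtain ⟨k, d, hk⟩ := List.exists_rotate_eq_append_singleton h0
  have hd : 4 ≤ d.length := by
    have := congrArg List.length hk
    simp only [List.length_rotate, List.length_append, List.length_singleton] at this
    omega
  obtain ⟨p, m, q, t, hm, rfl⟩ := List.exists_eq_cons_append_pair hd
  exact reducibleQuiddity_of_rotate_eq hc.2.1 (by simpa using hk) hm

theorem IsQuiddity.irreducibleQuiddity_of_length_eq_four {G : AddSubgroup ℂ} (h1 : (1 : ℂ) ∉ G)
    (hc : IsQuiddity G c) (hc4 : c.length = 4) : IrreducibleQuiddity G c := by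
  refine ⟨hc, by omega, ?_⟩
  rintro ⟨a, b, -, hb, ha3, hb3, hcyc⟩
  have hb3' : b.length = 3 := by
    have := hcyc.length_eq
    rw [length_oplus (by omega) (by omega)] at this
    omega
  obtain ⟨x, y, z, rfl⟩ := List.length_eq_three.mp hb3'
  have hy : y ∈ G := hb.2.1 y (by simp)
  rcases hb.mid_eq_one_or_neg_one with rfl | rfl
  · exact h1 hy
  · exact h1 (by simpa using G.neg_mem hy)

end Quiddity

theorem stmt19 (G : AddSubgroup ℂ) :
    (∀ c : List ℂ, IsQuiddity (G : Set ℂ) c → 5 ≤ c.length → (0 : ℂ) ∈ c →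
      ReducibleQuiddity (G : Set ℂ) c) ∧
    ((1 : ℂ) ∉ G → ∀ c : List ℂ, IsQuiddity (G : Set ℂ) c → c.length = 4 →
      IrreducibleQuiddity (G : Set ℂ) c) :=
  ⟨fun _ hc h5 h0 => hc.reducibleQuiddity_of_zero_mem h5 h0,
    fun h1 _ hc hc4 => hc.irreducibleQuiddity_of_length_eq_four h1 hc4⟩
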